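/- arXiv:1001.4992 — 6 statements merged into one kernel-verified Lean document; each statement's English description precedes it below -/
import Mathlib

section
/- Let l and k be positive natural numbers and let g : (Fin l → Bool) → (Fin k → Bool) be a check-bit function with the property that for all x, x' : Fin l → Bool with supp(x) strictly contained in supp(x'), the support of g(x) is not contained in the support of g(x'). Then the systematic encoding enc(x) = (x, g(x)), viewed as a binary string of length l + k, has the non-inclusive supports property: for all x ≠ x', the support of enc(x) is not contained in the support of enc(x'). -/
/-- If the check-bit function `g` maps strict support inclusions to non-inclusions of
supports, then the systematic encoding `x ↦ (x, g x)` (as a string of length `l + k`)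
has the non-inclusive supports property. -/
theorem systematic_encoding_non_inclusive_supports
    (l k : ℕ) (hl : 0 < l) (hk : 0 < k)
    (g : (Fin l → Bool) → (Fin k → Bool))
    (hg : ∀ x x' : Fin l → Bool,
      {i : Fin l | x i = true} ⊂ {i : Fin l | x' i = true} →
      ¬ ({j : Fin k | g x j = true} ⊆ {j : Fin k | g x' j = true})) :
    ∀ x x' : Fin l → Bool, x ≠ x' →
      ¬ ({i : Fin (l + k) | Fin.append x (g x) i = true} ⊆
         {i : Fin (l + k) | Fin.append x' (g x') i = true}) := by
  intro x x' hne hsub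
  have hx : {i : Fin l | x i = true} ⊆ {i : Fin l | x' i = true} := by
    intro i hi
    have := hsub (a := Fin.castAdd k i)
    simp only [Set.mem_setOf_eq, Fin.append_left] at this ⊢
    exact this hi
  have hgx : {j : Fin k | g x j = true} ⊆ {j : Fin k | g x' j = true} := by
    intro j hj
    have := hsub (a := Fin.natAdd l j)
    simp only [Set.mem_setOf_eq, Fin.append_right] at this ⊢
    exact this hj
  by_cases heq : {i : Fin l | x i = true} = {i : Fin l | x' i = true}
  · apply hne
    funext i
    have : (x i = true) ↔ (x' i = true) := by
      have := Set.ext_iff.mp heq i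
      simpa using this
    cases hxi : x i <;> cases hxi' : x' i <;> simp_all
  · exact hg x x' (ssubset_of_subset_of_ne hx heq) hgx
end

section
/- The Berger code has the non-inclusive supports property: let l, k be natural numbers with l < 2^k, and for x : Fin l → Bool let w(x) denote the number of positions i with x(i) = true. Define the Berger encoding B(x) to be the binary string of length l + k whose first l bits are x and whose last k bits are the bitwise complement of the k-bit binary representation of w(x) (i.e., the j-th check bit is the negation of the j-th bit of w(x)). Then for all x ≠ x', the support of B(x) is not contained in the support of B(x'). -/
/-! If the support of B(x) lies in that of B(x'), then on the data bits x ≤ x' with x ≠ x', so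
w(x) < w(x'). On the check bits, complementation reverses the inclusion: every bit of
w(x') below k is a bit of w(x), and since w(x') ≤ l < 2^k it has no other bits, so
w(x') ≤ w(x). -/

theorem Nat.le_of_testBit_of_lt_two_pow {m n k : ℕ} (hm : m < 2 ^ k)
    (h : ∀ j < k, m.testBit j = true → n.testBit j = true) : m ≤ n := by
  refine Nat.le_of_testBit fun j hj => h j ?_ hj
  by_contra! hkj
  rw [Nat.testBit_eq_false_of_lt (hm.trans_le (Nat.pow_le_pow_right two_pos hkj))] at hj
  exact Bool.false_ne_true hj

theorem Finset.card_filter_lt_card_filter_of_imp_of_ne {ι : Type*} [Fintype ι]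
    {f g : ι → Bool} (himp : ∀ i, f i = true → g i = true) (hne : f ≠ g) :
    (univ.filter fun i => f i = true).card < (univ.filter fun i => g i = true).card := by
  refine card_lt_card ⟨fun i => by simpa using himp i, fun hsup => hne ?_⟩
  funext i
  have hback : g i = true → f i = true := by simpa using @hsup i
  cases hf : f i <;> cases hg : g i <;> simp_all

theorem Fin.append_support_subset_iff {m n : ℕ} {x x' : Fin m → Bool} {y y' : Fin n → Bool} :
    {i | Fin.append x y i = true} ⊆ {i | Fin.append x' y' i = true} ↔
      (∀ i, x i = true → x' i = true) ∧ ∀ j, y j = true → y' j = true := by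
  simp only [Set.ofPred_subset_ofPred, Fin.forall_fin_add, Fin.append_left, Fin.append_right]

/-- The Berger code has the non-inclusive supports property: appending to `x` the
bitwise complement of the `k`-bit binary representation of its weight yields a code
in which no codeword's support is contained in another's. -/
theorem berger_code_non_inclusive_supports
    (l k : ℕ) (hlk : l < 2 ^ k)
    (B : (Fin l → Bool) → (Fin (l + k) → Bool))
    (hB : ∀ x : Fin l → Bool,
      B x = Fin.append x (fun j : Fin k =>
        ! (Nat.testBit ((Finset.univ.filter fun i : Fin l => x i = true).card) j))) :
    ∀ x x' : Fin l → Bool, x ≠ x' →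
      ¬ ({i : Fin (l + k) | B x i = true} ⊆ {i : Fin (l + k) | B x' i = true}) := by
  intro x x' hne hsub
  rw [hB, hB, Fin.append_support_subset_iff] at hsub
  obtain ⟨hdata, hcheck⟩ := hsub
  set w := (Finset.univ.filter fun i : Fin l => x i = true).card
  set w' := (Finset.univ.filter fun i : Fin l => x' i = true).card
  have hlt : w < w' := Finset.card_filter_lt_card_filter_of_imp_of_ne hdata hne
  have hw' : w' < 2 ^ k := (card_finset_fin_le _).trans_lt hlk
  have hle : w' ≤ w := Nat.le_of_testBit_of_lt_two_pow hw' fun j hj hbit => by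
    simpa [hbit] using mt (hcheck ⟨j, hj⟩)
  omega
end

section
/- Deterministic core of the ε-resistance proposition: let n, t₁, t₂ be natural numbers, h : (Fin n → Bool) → (Fin t₁ → Bool) a hash function, and α : (Fin t₁ → Bool) → (Fin t₂ → Bool) an injective encoding with the non-inclusive supports property. Suppose the sender transmits S = (s, α(h(s))) (a pair of binary strings of lengths n and t₂) and the receiver obtains S' = (s₁', s₂') where the adversary can only switch bits from 0 to 1, i.e., supp(s) ⊆ supp(s₁') and supp(α(h(s))) ⊆ supp(s₂'). If the receiver's verification passes, i.e., s₂' = α(h(s₁')), then h(s₁') = h(s); moreover, if additionally S' ≠ S, then s₁' ≠ s (so the adversary has produced a hash collision between two distinct strings). -/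
/-- Deterministic core of the ε-resistance proposition: if the adversary can only
switch bits from 0 to 1 and the receiver's verification `s₂' = α (h s₁')` passes,
then `h s₁' = h s`; moreover any nontrivial alteration forces `s₁' ≠ s`,
i.e. a hash collision between two distinct strings. -/
theorem integrity_verification_deterministic
    (n t₁ t₂ : ℕ)
    (h : (Fin n → Bool) → (Fin t₁ → Bool))
    (α : (Fin t₁ → Bool) → (Fin t₂ → Bool))
    (hαinj : Function.Injective α)
    (hα : ∀ m m' : Fin t₁ → Bool, m ≠ m' →
      ¬ ({j : Fin t₂ | α m j = true} ⊆ {j : Fin t₂ | α m' j = true}))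
    (s s₁' : Fin n → Bool) (s₂' : Fin t₂ → Bool)
    (hs₁ : {i : Fin n | s i = true} ⊆ {i : Fin n | s₁' i = true})
    (hs₂ : {j : Fin t₂ | α (h s) j = true} ⊆ {j : Fin t₂ | s₂' j = true})
    (hverif : s₂' = α (h s₁')) :
    h s₁' = h s ∧ ((s₁', s₂') ≠ (s, α (h s)) → s₁' ≠ s) :=
  by
  have hh : h s₁' = h s := by
    by_contra hne
    exact hα (h s) (h s₁') (Ne.symm hne) (hverif ▸ hs₂)
  refine ⟨hh, fun hneq hseq => hneq ?_⟩
  subst hseq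
  simp [hverif, hh]
end

section
/- Probabilistic ε-resistance against a fixed active adversary: let F be a nonempty finite family of hash functions from (Fin n → Bool) to (Fin t₁ → Bool) that is ε-almost-universal, meaning that for every pair of distinct inputs x ≠ y, the number of h ∈ F with h(x) = h(y) is at most ε times the cardinality of F. Let α : (Fin t₁ → Bool) → (Fin t₂ → Bool) be injective with the non-inclusive supports property. Fix a message s : Fin n → Bool and a fixed adversarial alteration, i.e., fixed received strings s₁' and, for each h, a received tag s₂'(h), subject to the unidirectionality constraints supp(s) ⊆ supp(s₁') and supp(α(h(s))) ⊆ supp(s₂'(h)) for every h ∈ F, and such that the alteration is nontrivial, i.e., (s₁', s₂'(h)) ≠ (s, α(h(s))) for every h ∈ F. Then the probability, over h drawn uniformly from F, that the verification passes (s₂'(h) = α(h(s₁'))) is at most ε. -/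
/-- Probabilistic ε-resistance against a fixed active adversary: if `F` is a
nonempty ε-almost-universal family of hash functions and `α` is an injective
encoding with the non-inclusive supports property, then for any fixed nontrivial
0-to-1 alteration, the probability over a uniformly random `h ∈ F` that the
verification passes is at most `ε`. -/
theorem integrity_verification_epsilon_resistant
    (n t₁ t₂ : ℕ) (ε : ℝ) (hε : 0 ≤ ε)
    (F : Finset ((Fin n → Bool) → (Fin t₁ → Bool))) (hF : F.Nonempty)
    (hAU : ∀ x y : Fin n → Bool, x ≠ y →
      ((F.filter fun h => h x = h y).card : ℝ) ≤ ε * (F.card : ℝ))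
    (α : (Fin t₁ → Bool) → (Fin t₂ → Bool))
    (hαinj : Function.Injective α)
    (hα : ∀ m m' : Fin t₁ → Bool, m ≠ m' →
      ¬ ({j : Fin t₂ | α m j = true} ⊆ {j : Fin t₂ | α m' j = true}))
    (s s₁' : Fin n → Bool)
    (s₂' : ((Fin n → Bool) → (Fin t₁ → Bool)) → (Fin t₂ → Bool))
    (hs₁ : {i : Fin n | s i = true} ⊆ {i : Fin n | s₁' i = true})
    (hs₂ : ∀ h ∈ F, {j : Fin t₂ | α (h s) j = true} ⊆ {j : Fin t₂ | s₂' h j = true})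
    (hnontrivial : ∀ h ∈ F, (s₁', s₂' h) ≠ (s, α (h s))) :
    ((F.filter fun h => s₂' h = α (h s₁')).card : ℝ) / (F.card : ℝ) ≤ ε :=
by
  have hFpos : (0:ℝ) < F.card := by exact_mod_cast Finset.card_pos.mpr hF
  by_cases hcase : s₁' = s
  · subst hcase
    have hempty : (F.filter fun h => s₂' h = α (h s₁')) = ∅ := by
      apply Finset.filter_false_of_mem
      intro h hh heq
      exact hnontrivial h hh (by rw [Prod.mk.injEq]; exact ⟨rfl, heq⟩)
    rw [hempty]
    simpa using hε
  · have hsub : (F.filter fun h => s₂' h = α (h s₁')) ⊆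
        (F.filter fun h => h s = h s₁') := by
      intro h hh
      simp only [Finset.mem_filter] at hh ⊢
      refine ⟨hh.1, ?_⟩
      by_contra hne
      exact hα _ _ hne (by rw [← hh.2]; exact hs₂ h hh.1)
    have hle := hAU s s₁' (fun e => hcase e.symm)
    have hcard : ((F.filter fun h => s₂' h = α (h s₁')).card : ℝ) ≤ ε * F.card :=
      le_trans (by exact_mod_cast Finset.card_le_card hsub) hle
    rw [div_le_iff₀ hFpos]
    exact hcard
end

section
/- Iterated Bit Pair Iteration forces the error probability to 0: define f(p) = p² / (p² + (1 - p)²). For every real p with 0 < p < 1/2, one has 0 < f(p) < 1/2, so the sequence defined by p₀ = p and p_{k+1} = f(p_k) remains in the open interval (0, 1/2); moreover this sequence is strictly decreasing and converges to 0. -/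
lemma bpi_aux (x : ℝ) (h0 : 0 < x) (h2 : x < 1 / 2) :
    0 < x ^ 2 / (x ^ 2 + (1 - x) ^ 2) ∧
    x ^ 2 / (x ^ 2 + (1 - x) ^ 2) < 1 / 2 ∧
    x ^ 2 / (x ^ 2 + (1 - x) ^ 2) ≤ 2 * x ^ 2 ∧
    x ^ 2 / (x ^ 2 + (1 - x) ^ 2) < x := by
  have hd : (0:ℝ) < x ^ 2 + (1 - x) ^ 2 := by nlinarith
  refine ⟨div_pos (by positivity) hd, ?_, ?_, ?_⟩
  · rw [div_lt_iff₀ hd]; nlinarith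
  · rw [div_le_iff₀ hd]; nlinarith [sq_nonneg (2*x-1), sq_nonneg x, mul_pos h0 h0]
  · rw [div_lt_iff₀ hd]; nlinarith [mul_pos (mul_pos h0 (by linarith : (0:ℝ) < 1/2 - x)) (by linarith : (0:ℝ) < 1 - x)]

/-- Iterated Bit Pair Iteration forces the error probability to 0: for
`f p = p² / (p² + (1 - p)²)` and `0 < p < 1/2`, we have `0 < f p < 1/2`; the
iterates `p₀ = p`, `p_{k+1} = f (p_k)` stay in `(0, 1/2)`, are strictly
decreasing, and converge to `0`. -/
theorem bit_pair_iteration_tendsto_zero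
    (f : ℝ → ℝ) (hf : ∀ p : ℝ, f p = p ^ 2 / (p ^ 2 + (1 - p) ^ 2))
    (p : ℝ) (hp0 : 0 < p) (hp2 : p < 1 / 2)
    (seq : ℕ → ℝ) (hseq0 : seq 0 = p) (hseqS : ∀ k : ℕ, seq (k + 1) = f (seq k)) :
    (0 < f p ∧ f p < 1 / 2) ∧
    (∀ k : ℕ, 0 < seq k ∧ seq k < 1 / 2) ∧
    StrictAnti seq ∧
    Filter.Tendsto seq Filter.atTop (nhds 0) := by
  have key : ∀ x : ℝ, 0 < x → x < 1/2 →
      0 < f x ∧ f x < 1/2 ∧ f x ≤ 2 * x ^ 2 ∧ f x < x := by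
    intro x h0 h2; rw [hf]; exact bpi_aux x h0 h2
  have inv : ∀ k, 0 < seq k ∧ seq k < 1/2 := by
    intro k
    induction k with
    | zero => rw [hseq0]; exact ⟨hp0, hp2⟩
    | succ n ih =>
      rw [hseqS]
      exact ⟨(key _ ih.1 ih.2).1, (key _ ih.1 ih.2).2.1⟩
  have hdec : StrictAnti seq := by
    apply strictAnti_nat_of_succ_lt
    intro n
    rw [hseqS]
    exact (key _ (inv n).1 (inv n).2).2.2.2
  have hle : ∀ k, seq k ≤ p := by
    intro k
    calc seq k ≤ seq 0 := hdec.antitone (Nat.zero_le k)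
    _ = p := hseq0
  have hbound : ∀ k, seq k ≤ (2*p) ^ k * p := by
    intro k
    induction k with
    | zero => simp [hseq0]
    | succ n ih =>
      rw [hseqS]
      have h1 := (key _ (inv n).1 (inv n).2).2.2.1
      have h2 : 2 * (seq n) ^ 2 ≤ (2 * p) * seq n := by
        nlinarith [(inv n).1, hle n]
      have h3 : (2 * p) * seq n ≤ (2 * p) * ((2*p)^n * p) := by
        apply mul_le_mul_of_nonneg_left ih (by linarith)
      calc f (seq n) ≤ 2 * (seq n) ^ 2 := h1
        _ ≤ (2 * p) * seq n := h2
        _ ≤ (2 * p) * ((2*p)^n * p) := h3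
        _ = (2*p)^(n+1) * p := by ring
  have htend : Filter.Tendsto (fun k => (2*p)^k * p) Filter.atTop (nhds 0) := by
    have : Filter.Tendsto (fun k : ℕ => (2*p)^k) Filter.atTop (nhds 0) := by
      apply tendsto_pow_atTop_nhds_zero_of_lt_one (by linarith) (by linarith)
    simpa using this.mul_const p
  have hz : Filter.Tendsto seq Filter.atTop (nhds 0) := by
    apply tendsto_of_tendsto_of_tendsto_of_le_of_le tendsto_const_nhds htend
    · exact fun k => (inv k).1.le
    · exact hbound
  exact ⟨⟨(key p hp0 hp2).1, (key p hp0 hp2).2.1⟩, inv, hdec, hz⟩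
end

section
/- The Bit Pair Iteration map preserves and amplifies the advantage of the less noisy channel: define f(p) = p² / (p² + (1 - p)²). For all real numbers p, q with 0 < p < q < 1/2, one has f(p) < f(q) (f is strictly increasing on (0, 1/2)) and moreover f(p)/p < f(q)/q, i.e., the relative reduction of the error probability produced by one round of Bit Pair Iteration is strictly stronger for the channel with the smaller error probability. -/
/-- The Bit Pair Iteration map `f p = p² / (p² + (1 - p)²)` is strictly increasing
on `(0, 1/2)`, and the relative reduction `f p / p` is also strictly increasing
there: the less noisy channel benefits from a strictly stronger reduction. -/
theorem bit_pair_iteration_monotone_and_advantage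
    (f : ℝ → ℝ) (hf : ∀ p : ℝ, f p = p ^ 2 / (p ^ 2 + (1 - p) ^ 2))
    (p q : ℝ) (hp0 : 0 < p) (hpq : p < q) (hq2 : q < 1 / 2) :
    f p < f q ∧ f p / p < f q / q := by
  have hq0 : 0 < q := hp0.trans hpq
  have hDp : 0 < p ^ 2 + (1 - p) ^ 2 := by nlinarith
  have hDq : 0 < q ^ 2 + (1 - q) ^ 2 := by nlinarith
  rw [hf, hf]
  have h1 : 0 < p + q - 2 * p * q := by nlinarith
  have h2 : 0 < 1 - 2 * p * q := by nlinarith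
  constructor
  · rw [div_lt_div_iff₀ hDp hDq]
    nlinarith [mul_pos (sub_pos.2 hpq) h1]
  · rw [div_div, div_div, div_lt_div_iff₀ (mul_pos hDp hp0) (mul_pos hDq hq0)]
    nlinarith [mul_pos (mul_pos (mul_pos hp0 hq0) (sub_pos.2 hpq)) h2]
end
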